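/- Let Q be a compact convex set with (cos α)·D_O ⊆ Q ⊆ D_O, α ∈ (0, π/22). Let p, q ∈ ℝ² and u a direction such that the homothetic copies Q_{pq}(u−5α) and Q_{pq}(u+5α) of Q both exist. Then the Euclidean disk D_{pq}(u) through p and q with center on the ray u[p] exists; i.e., the angle between the vector pq and the direction u is strictly less than π/2. -/

import Mathlib

open Real
open scoped Pointwise

/-- Clockwise rotation of the direction `u ∈ ℂ ≅ ℝ²` by the angle `θ`. -/
noncomputable def rotCW (θ : ℝ) (u : ℂ) : ℂ := Complex.exp (-(θ : ℂ) * Complex.I) * u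

/-- The homothetic copy of `Q ⊆ ℂ ≅ ℝ²` with center placed at `z` and scaling factor `lam`
(`Q` is regarded as centered at the origin). -/
noncomputable def homothet (Q : Set ℂ) (z : ℂ) (lam : ℝ) : Set ℂ := (fun w => z + (lam : ℂ) * w) '' Q

/-- The planar cross product: positive iff `b` lies (strictly) counterclockwise of `a`,
i.e. iff `b` is to the left of the directed line along `a`. -/
noncomputable def cross2 (a b : ℂ) : ℝ := a.re * b.im - a.im * b.re

/-!
A homothetic copy of `Q` with `p` on its boundary contains the disk of radius `t cos α` around its
center `p + t • v`, so by convexity `q - p` makes an angle of at most `π/2 + α` with `v` (Claim 4.3).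
Applied to the two directions `u ∓ 5α`, which are `10α` apart, this forces `⟪q - p, u⟫ > 0`; the
disk centered at `p + r • u` with `r = ‖q - p‖² / (2 ⟪q - p, u⟫)` then passes through `p` and `q`.
-/

section InnerProductSpace

variable {E : Type*} [NormedAddCommGroup E] [InnerProductSpace ℝ E]

open RealInnerProductSpace

/-- Otherwise `p` lies strictly between `q` and a point of the ball, hence in `interior K`. -/
theorem neg_mul_sin_le_inner_of_ball_subset {K : Set E} (hK : Convex ℝ K) {p q v : E}
    (hv : ‖v‖ = 1) {t α : ℝ} (ht : 0 < t) (hsin : 0 ≤ sin α) (hcos : 0 ≤ cos α)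
    (hball : Metric.ball (p + t • v) (t * cos α) ⊆ K) (hp : p ∉ interior K)
    (hq : q ∈ closure K) : -(‖q - p‖ * sin α) ≤ ⟪q - p, v⟫ := by
  by_contra! hlt
  set w := q - p with hw
  set I := ⟪w, v⟫
  have hI : I < 0 := by nlinarith [norm_nonneg w]
  have hs : 0 < ‖w‖ := norm_pos_iff.2 fun h => by simp [I, h] at hI
  have hI2 : ‖w‖ ^ 2 * sin α ^ 2 < I ^ 2 := by
    have := pow_lt_pow_left₀ (lt_neg_of_lt_neg hlt) (by positivity) two_ne_zero
    linarith [neg_sq I, mul_pow ‖w‖ (sin α) 2]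
  -- `x` is the foot of the perpendicular from the center `p + t • v` to the line `pq`
  set μ := -(t * I) / ‖w‖ ^ 2 with hμ
  have hμ0 : 0 < μ := div_pos (by nlinarith) (by positivity)
  set x := p - μ • w
  have hnorm : ‖μ • w + t • v‖ ^ 2 = t ^ 2 - t ^ 2 * I ^ 2 / ‖w‖ ^ 2 := by
    rw [norm_add_sq_real, norm_smul, norm_smul, real_inner_smul_left, real_inner_smul_right, hv,
      Real.norm_eq_abs, Real.norm_eq_abs, abs_of_pos hμ0, abs_of_pos ht, hμ]
    field_simp
    ring
  have hx : x ∈ interior K := by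
    refine interior_maximal hball Metric.isOpen_ball ?_
    have hxc : x - (p + t • v) = -(μ • w + t • v) := by simp only [x]; abel
    rw [Metric.mem_ball, dist_eq_norm, hxc, norm_neg]
    refine lt_of_pow_lt_pow_left₀ 2 (by positivity) ?_
    rw [hnorm, mul_pow, Real.cos_sq']
    have : t ^ 2 * sin α ^ 2 < t ^ 2 * I ^ 2 / ‖w‖ ^ 2 := by
      rw [lt_div_iff₀ (by positivity)]
      nlinarith [mul_lt_mul_of_pos_left hI2 (pow_pos ht 2)]
    linarith
  have hcombo : (1 / (1 + μ)) • x + (μ / (1 + μ)) • q = p := by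
    rw [div_eq_inv_mul, div_eq_inv_mul, mul_smul, mul_smul, ← smul_add, one_smul,
      show x + μ • q = (1 + μ) • p by simp only [x, hw]; module, inv_smul_smul₀ (by positivity)]
  exact hp (hcombo ▸ hK.combo_interior_closure_mem_interior hx hq (by positivity)
    (by positivity) (by field_simp))

theorem exists_dist_add_smul_eq_of_inner_pos {p q u : E} (hu : ‖u‖ = 1) (h : 0 < ⟪q - p, u⟫) :
    ∃ r : ℝ, 0 < r ∧ dist q (p + r • u) = r := by
  have hqp : q - p ≠ 0 := fun h0 => by simp [h0] at h
  have hr : 0 < ‖q - p‖ ^ 2 / (2 * ⟪q - p, u⟫) :=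
    div_pos (pow_pos (norm_pos_iff.2 hqp) 2) (by linarith)
  refine ⟨_, hr, ?_⟩
  rw [dist_eq_norm, sub_add_eq_sub_sub, ← sq_eq_sq₀ (norm_nonneg _) hr.le, norm_sub_sq_real,
    real_inner_smul_right, norm_smul, hu, Real.norm_of_nonneg hr.le]
  field_simp
  ring

end InnerProductSpace

theorem homothet_eq_image_smul (Q : Set ℂ) (z : ℂ) (lam : ℝ) :
    homothet Q z lam = (fun w => z + lam • w) '' Q := by
  simp only [homothet, Complex.real_smul]

theorem Convex.homothet {Q : Set ℂ} (hQ : Convex ℝ Q) (z : ℂ) (lam : ℝ) :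
    Convex ℝ (homothet Q z lam) :=
  homothet_eq_image_smul Q z lam ▸ hQ.affinity z lam

theorem homothet_mono {Q Q' : Set ℂ} (h : Q ⊆ Q') (z : ℂ) (lam : ℝ) :
    homothet Q z lam ⊆ homothet Q' z lam :=
  Set.image_mono h

theorem homothet_closedBall_zero {lam : ℝ} (hlam : 0 < lam) (z : ℂ) (ρ : ℝ) :
    homothet (Metric.closedBall 0 ρ) z lam = Metric.closedBall z (lam * ρ) := by
  have hlam' : (lam : ℂ) ≠ 0 := Complex.ofReal_ne_zero.2 hlam.ne'
  ext x
  simp only [homothet, Set.mem_image, Metric.mem_closedBall, dist_eq_norm, sub_zero]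
  constructor
  · rintro ⟨w, hw, rfl⟩
    rw [add_sub_cancel_left, norm_mul, Complex.norm_real, Real.norm_of_nonneg hlam.le]
    gcongr
  · intro hx
    refine ⟨(x - z) / lam, ?_, by field_simp; ring⟩
    rwa [norm_div, Complex.norm_real, Real.norm_of_nonneg hlam.le, div_le_iff₀' hlam]

/-- Claim 4.3: the outer disk of `Q` gives `t ≤ lam`, so the copy contains the disk of radius
`t cos α` around its center. -/
theorem neg_mul_sin_le_inner_of_mem_frontier_homothet {α : ℝ} (hα : α ∈ Set.Icc 0 (π / 2))
    {Q : Set ℂ} (hQconv : Convex ℝ Q) (hsub : cos α • Metric.closedBall (0 : ℂ) 1 ⊆ Q)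
    (hsup : Q ⊆ Metric.closedBall (0 : ℂ) 1) {p q v : ℂ} (hv : ‖v‖ = 1) {t lam : ℝ}
    (ht : 0 < t) (hlam : 0 < lam) (hp : p ∈ frontier (homothet Q (p + t • v) lam))
    (hq : q ∈ closure (homothet Q (p + t • v) lam)) :
    -(‖q - p‖ * sin α) ≤ inner ℝ (q - p) v := by
  have hcos : 0 ≤ cos α := Real.cos_nonneg_of_mem_Icc ⟨by linarith [hα.1, pi_pos], hα.2⟩
  have hsin : 0 ≤ sin α := Real.sin_nonneg_of_nonneg_of_le_pi hα.1 (by linarith [hα.2, pi_pos])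
  have hinner : Metric.closedBall (0 : ℂ) (cos α) ⊆ Q := by
    simpa [smul_closedBall _ _ zero_le_one, Real.norm_of_nonneg hcos] using hsub
  have hpt : t ≤ lam := by
    have hclosure := closure_minimal (homothet_mono hsup _ _)
      (homothet_closedBall_zero hlam _ _ ▸ Metric.isClosed_closedBall) (frontier_subset_closure hp)
    rw [homothet_closedBall_zero hlam, mul_one, Metric.mem_closedBall, dist_eq_norm,
      sub_add_cancel_left, norm_neg, norm_smul, hv, mul_one, Real.norm_of_nonneg ht.le] at hclosure
    exact hclosure
  refine neg_mul_sin_le_inner_of_ball_subset (hQconv.homothet _ _) hv ht hsin hcos ?_ hp.2 hq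
  calc Metric.ball (p + t • v) (t * cos α)
      ⊆ Metric.closedBall (p + t • v) (lam * cos α) :=
        Metric.ball_subset_closedBall.trans (Metric.closedBall_subset_closedBall (by gcongr))
    _ = homothet (Metric.closedBall 0 (cos α)) (p + t • v) lam :=
        (homothet_closedBall_zero hlam _ _).symm
    _ ⊆ homothet Q (p + t • v) lam := homothet_mono hinner _ _

open Complex in
theorem rotCW_eq (θ : ℝ) (u : ℂ) : rotCW θ u = Real.cos θ • u - Real.sin θ • (I * u) := by
  rw [rotCW, show -(θ : ℂ) * I = ((-θ : ℝ) : ℂ) * I by push_cast; ring, exp_mul_I,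
    ← ofReal_cos, ← ofReal_sin, Real.cos_neg, Real.sin_neg, real_smul, real_smul]
  push_cast
  ring

theorem norm_rotCW (θ : ℝ) (u : ℂ) : ‖rotCW θ u‖ = ‖u‖ := by
  rw [rotCW, norm_mul, show -(θ : ℂ) * Complex.I = ((-θ : ℝ) : ℂ) * Complex.I by push_cast; ring,
    Complex.norm_exp_ofReal_mul_I, one_mul]

theorem inner_rotCW (θ : ℝ) (w u : ℂ) :
    inner ℝ w (rotCW θ u) = cos θ * inner ℝ w u - sin θ * inner ℝ w (Complex.I * u) := by
  rw [rotCW_eq, inner_sub_right, real_inner_smul_right, real_inner_smul_right]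

theorem norm_sq_eq_inner_sq_add_inner_I_mul_sq (w : ℂ) {u : ℂ} (hu : ‖u‖ = 1) :
    ‖w‖ ^ 2 = inner ℝ w u ^ 2 + inner ℝ w (Complex.I * u) ^ 2 := by
  have hu2 : u.re ^ 2 + u.im ^ 2 = 1 := by
    linear_combination (Complex.sq_norm_sub_sq_re u).symm + congrArg (· ^ 2) hu
  have hw2 := Complex.sq_norm_sub_sq_re w
  simp only [Complex.inner, Complex.mul_re, Complex.mul_im,
    Complex.I_re, Complex.I_im, Complex.conj_re, Complex.conj_im]
  linear_combination hw2 - (w.re ^ 2 + w.im ^ 2) * hu2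

theorem sin_div_sin_five_mul_add_sin_div_cos_five_mul_lt_one {α : ℝ}
    (hα : α ∈ Set.Ioo 0 (π / 22)) : sin α / sin (5 * α) + sin α / cos (5 * α) < 1 := by
  obtain ⟨hα0, hαπ⟩ := hα
  have hα_lt : α < 0.1432 := by linarith [pi_lt_d2]
  have hsin_le : sin α ≤ α := sin_le hα0.le
  have hα_sq : α ^ 2 < 0.0206 := by nlinarith
  have hsin5 : 4 * α ≤ sin (5 * α) := by
    nlinarith [sin_gt_sub_cube (x := 5 * α) (by positivity), mul_lt_mul_of_pos_left hα_sq hα0]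
  have hcos5 : 0.74 ≤ cos (5 * α) := by
    nlinarith [one_sub_sq_div_two_le_cos (x := 5 * α)]
  have h1 : sin α / sin (5 * α) ≤ 1 / 4 := by
    rw [div_le_iff₀ (by linarith)]; linarith
  have h2 : sin α / cos (5 * α) < 1 / 5 := by
    rw [div_lt_iff₀ (by linarith)]; linarith
  linarith

/-- If `⟪w, u⟫ ≤ 0`, both `|⟪w, u⟫| cos 5α` and `|⟪w, I u⟫| sin 5α` are at most `‖w‖ sin α`,
too little to make up `‖w‖`. -/
theorem inner_pos_of_neg_mul_sin_le_inner_rotCW {α : ℝ} (hα : α ∈ Set.Ioo 0 (π / 22))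
    {w u : ℂ} (hw : w ≠ 0) (hu : ‖u‖ = 1)
    (hneg : -(‖w‖ * sin α) ≤ inner ℝ w (rotCW (-(5 * α)) u))
    (hpos : -(‖w‖ * sin α) ≤ inner ℝ w (rotCW (5 * α) u)) :
    0 < inner ℝ w u := by
  rw [inner_rotCW, cos_neg, sin_neg] at hneg
  rw [inner_rotCW] at hpos
  set a := inner ℝ w u
  set b := inner ℝ w (Complex.I * u)
  have h5α : 5 * α ∈ Set.Ioo 0 (π / 2) := ⟨by linarith [hα.1], by linarith [hα.2, pi_pos]⟩
  have hsin5 : 0 < sin (5 * α) := sin_pos_of_pos_of_lt_pi h5α.1 (by linarith [h5α.2, pi_pos])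
  have hcos5 : 0 < cos (5 * α) := cos_pos_of_mem_Ioo ⟨by linarith [h5α.1, pi_pos], h5α.2⟩
  have hs : 0 < ‖w‖ := norm_pos_iff.2 hw
  by_contra! ha
  have hca : cos (5 * α) * a ≤ 0 := mul_nonpos_of_nonneg_of_nonpos hcos5.le ha
  have habs_a : |a| ≤ ‖w‖ * sin α / cos (5 * α) := by
    rw [abs_of_nonpos ha, le_div_iff₀ hcos5]; linarith
  have habs_b : |b| ≤ ‖w‖ * sin α / sin (5 * α) := by
    have hb : |sin (5 * α) * b| ≤ ‖w‖ * sin α := abs_le.2 ⟨by linarith, by linarith⟩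
    rw [abs_mul, abs_of_pos hsin5] at hb
    rwa [le_div_iff₀ hsin5, mul_comm]
  have hw_le : ‖w‖ ≤ |a| + |b| := by
    refine (pow_le_pow_iff_left₀ hs.le (by positivity) two_ne_zero).1 ?_
    rw [norm_sq_eq_inner_sq_add_inner_I_mul_sq w hu, add_sq, sq_abs, sq_abs]
    nlinarith [abs_nonneg a, abs_nonneg b]
  have hsmall := sin_div_sin_five_mul_add_sin_div_cos_five_mul_lt_one hα
  refine lt_irrefl ‖w‖ ?_
  calc ‖w‖ ≤ ‖w‖ * sin α / cos (5 * α) + ‖w‖ * sin α / sin (5 * α) := by linarith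
    _ = ‖w‖ * (sin α / sin (5 * α) + sin α / cos (5 * α)) := by ring
    _ < ‖w‖ * 1 := by gcongr
    _ = ‖w‖ := mul_one _

theorem stmt_14_general (α : ℝ) (hα : α ∈ Set.Ioo 0 (π / 22))
    (Q : Set ℂ) (hQconv : Convex ℝ Q)
    (hsub : Real.cos α • Metric.closedBall (0 : ℂ) 1 ⊆ Q)
    (hsup : Q ⊆ Metric.closedBall (0 : ℂ) 1)
    (p q : ℂ) (hpq : p ≠ q) (u : ℂ) (hu : ‖u‖ = 1)
    (t₁ lam₁ t₂ lam₂ : ℝ) (ht₁ : 0 < t₁) (hlam₁ : 0 < lam₁) (ht₂ : 0 < t₂) (hlam₂ : 0 < lam₂)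
    (hp₁ : p ∈ frontier (homothet Q (p + t₁ • rotCW (-(5 * α)) u) lam₁))
    (hq₁ : q ∈ frontier (homothet Q (p + t₁ • rotCW (-(5 * α)) u) lam₁))
    (hp₂ : p ∈ frontier (homothet Q (p + t₂ • rotCW (5 * α) u) lam₂))
    (hq₂ : q ∈ frontier (homothet Q (p + t₂ • rotCW (5 * α) u) lam₂)) :
    ∃ r : ℝ, 0 < r ∧ dist q (p + r • u) = r := by
  have hα' : α ∈ Set.Icc 0 (π / 2) := ⟨hα.1.le, by linarith [hα.2, pi_pos]⟩
  have hnorm (θ : ℝ) : ‖rotCW θ u‖ = 1 := (norm_rotCW θ u).trans hu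
  refine exists_dist_add_smul_eq_of_inner_pos hu
    (inner_pos_of_neg_mul_sin_le_inner_rotCW hα (sub_ne_zero.2 hpq.symm) hu ?_ ?_)
  · exact neg_mul_sin_le_inner_of_mem_frontier_homothet hα' hQconv hsub hsup (hnorm _) ht₁ hlam₁
      hp₁ (frontier_subset_closure hq₁)
  · exact neg_mul_sin_le_inner_of_mem_frontier_homothet hα' hQconv hsub hsup (hnorm _) ht₂ hlam₂
      hp₂ (frontier_subset_closure hq₂)

/-- Existence step (i) in the proof of Theorem 1.1(ii): let `Q` be compact convex with
`(cos α) • D_O ⊆ Q ⊆ D_O`, `α ∈ (0, π/22)`. If both homothetic copies `Q_{pq}(u−5α)` and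
`Q_{pq}(u+5α)` of `Q` (touching `p` and `q`, centered on the rays from `p` in the directions
obtained from `u` by rotating by `∓5α`) exist, then the Euclidean disk `D_{pq}(u)` through `p`
and `q` with center on the ray `u[p]` exists. -/
theorem stmt_14 (α : ℝ) (hα : α ∈ Set.Ioo 0 (π / 22))
    (Q : Set ℂ) (hQc : IsCompact Q) (hQconv : Convex ℝ Q)
    (hsub : Real.cos α • Metric.closedBall (0 : ℂ) 1 ⊆ Q)
    (hsup : Q ⊆ Metric.closedBall (0 : ℂ) 1)
    (p q : ℂ) (hpq : p ≠ q) (u : ℂ) (hu : ‖u‖ = 1)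
    (t₁ lam₁ t₂ lam₂ : ℝ) (ht₁ : 0 < t₁) (hlam₁ : 0 < lam₁) (ht₂ : 0 < t₂) (hlam₂ : 0 < lam₂)
    (hp₁ : p ∈ frontier (homothet Q (p + t₁ • rotCW (-(5 * α)) u) lam₁))
    (hq₁ : q ∈ frontier (homothet Q (p + t₁ • rotCW (-(5 * α)) u) lam₁))
    (hp₂ : p ∈ frontier (homothet Q (p + t₂ • rotCW (5 * α) u) lam₂))
    (hq₂ : q ∈ frontier (homothet Q (p + t₂ • rotCW (5 * α) u) lam₂)) :
    ∃ r : ℝ, 0 < r ∧ dist q (p + r • u) = r :=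
  stmt_14_general α hα Q hQconv hsub hsup p q hpq u hu t₁ lam₁ t₂ lam₂ ht₁ hlam₁ ht₂ hlam₂ hp₁ hq₁
    hp₂ hq₂
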